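/- arXiv:1705.04050 — 6 statements merged into one kernel-verified Lean document; each statement's English description precedes it below -/
import Mathlib

section
/- Let n ≥ 1 be an integer, 0 < α < n and γ > 0. Then the Bessel-Riesz kernel K_{α,γ}(x) = |x|^{α−n}/(1+|x|)^γ belongs to the Morrey space L^{s,t}(ℝⁿ) for every 1 ≤ s < t = n/(n−α), with ||K_{α,γ}||_{L^{s,t}} ≤ ||K_α||_{L^{s,t}} < ∞, since K_{α,γ}(x) ≤ K_α(x) = |x|^{α−n} for every x ≠ 0. -/
/-!
Since `(1 + ‖x‖) ^ γ ≥ 1`, we have `|K_{α,γ}| ≤ |K_α|` pointwise, and the Morrey norm is monotone.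
For `K_α`, put `p = (α - n) s ∈ (-n, 0]`. Splitting at `‖x‖ = R`,
`∫_{B(a,R)} ‖x‖^p ≤ R^p |B(a,R)| + ∫_{B(0,R)} ‖x‖^p = R^{n+p} (|B(0,1)| + ∫_{B(0,1)} ‖x‖^p)`,
and the last integral is finite because `p > -n`. For `t = n / (n - α)` the powers of `R` in
`|B|^{1/t - 1/s} (∫_B K_α^s)^{1/s}` cancel, so the supremum over all balls is finite.
-/

open MeasureTheory Metric
open scoped ENNReal NNReal

/-- The Riesz kernel `K_α(x) = |x|^{α-n}`. -/
noncomputable def rieszKernel (n : ℕ) (α : ℝ) (x : EuclideanSpace ℝ (Fin n)) : ℝ :=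
  ‖x‖ ^ (α - (n : ℝ))

/-- The Bessel-Riesz kernel `K_{α,γ}(x) = |x|^{α-n} / (1+|x|)^γ`. -/
noncomputable def besselRieszKernel (n : ℕ) (α γ : ℝ) (x : EuclideanSpace ℝ (Fin n)) : ℝ :=
  ‖x‖ ^ (α - (n : ℝ)) / (1 + ‖x‖) ^ γ

/-- The Bessel-Riesz operator `I_{α,γ} f (x) = ∫ K_{α,γ}(x-y) f(y) dy`. -/
noncomputable def besselRiesz (n : ℕ) (α γ : ℝ)
    (f : EuclideanSpace ℝ (Fin n) → ℝ) (x : EuclideanSpace ℝ (Fin n)) : ℝ :=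
  ∫ y, besselRieszKernel n α γ (x - y) * f y

/-- The Morrey norm `‖f‖_{L^{p,q}} = sup_B |B|^{1/q-1/p} (∫_B |f|^p)^{1/p}`. -/
noncomputable def morreyNorm (n : ℕ) (p q : ℝ)
    (f : EuclideanSpace ℝ (Fin n) → ℝ) : ℝ≥0∞ :=
  ⨆ (a : EuclideanSpace ℝ (Fin n)) (R : ℝ) (_ : 0 < R),
    volume (ball a R) ^ (1 / q - 1 / p) *
      (∫⁻ x in ball a R, ENNReal.ofReal (|f x| ^ p)) ^ (1 / p)

/-- The generalized Morrey norm
`‖f‖_{L^{p,φ}} = sup_B (1/φ(R)) ((1/|B|) ∫_B |f|^p)^{1/p}`. -/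
noncomputable def gMorreyNorm (n : ℕ) (p : ℝ) (φ : ℝ → ℝ)
    (f : EuclideanSpace ℝ (Fin n) → ℝ) : ℝ≥0∞ :=
  ⨆ (a : EuclideanSpace ℝ (Fin n)) (R : ℝ) (_ : 0 < R),
    (ENNReal.ofReal (φ R))⁻¹ *
      ((volume (ball a R))⁻¹ * ∫⁻ x in ball a R, ENNReal.ofReal (|f x| ^ p)) ^ (1 / p)

/-- `φ : (0,∞) → (0,∞)` is of class `G_p`: positive on `(0,∞)`, almost decreasing, and
`r ↦ φ(r)^p r^n` is almost increasing. -/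
def IsClassG (n : ℕ) (p : ℝ) (φ : ℝ → ℝ) : Prop :=
  (∀ r : ℝ, 0 < r → 0 < φ r) ∧
  (∃ C : ℝ, 0 < C ∧ ∀ r s : ℝ, 0 < r → r ≤ s → C * φ s ≤ φ r) ∧
  (∃ C : ℝ, 0 < C ∧ ∀ r s : ℝ, 0 < r → r ≤ s →
    φ r ^ p * r ^ (n : ℝ) ≤ C * (φ s ^ p * s ^ (n : ℝ)))

/-- `ρ` is almost increasing on `(0,∞)`. -/
def IsAlmostIncreasing (ρ : ℝ → ℝ) : Prop :=
  ∃ C : ℝ, 0 < C ∧ ∀ r s : ℝ, 0 < r → r ≤ s → ρ r ≤ C * ρ s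

/-- Operator norm of `I_{α,γ}` from `L^{p₁,φ}` to `L^{p₂,ψ}`. -/
noncomputable def besselRieszOpNormGM (n : ℕ) (α γ p₁ p₂ : ℝ) (φ ψ : ℝ → ℝ) : ℝ≥0∞ :=
  ⨆ f : {f : EuclideanSpace ℝ (Fin n) → ℝ //
      Measurable f ∧ gMorreyNorm n p₁ φ f ≠ 0 ∧ gMorreyNorm n p₁ φ f ≠ ⊤},
    gMorreyNorm n p₂ ψ (besselRiesz n α γ f.1) / gMorreyNorm n p₁ φ f.1

section HaarRpowNorm

variable {E : Type*} [NormedAddCommGroup E] [NormedSpace ℝ E] [FiniteDimensional ℝ E]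
  [MeasurableSpace E] [BorelSpace E] (μ : Measure E) [μ.IsAddHaarMeasure]

open Module

lemma setLIntegral_ball_zero_rpow_norm (p : ℝ) {R : ℝ} (hR : 0 < R) :
    ∫⁻ x in ball (0 : E) R, ENNReal.ofReal (‖x‖ ^ p) ∂μ =
      ENNReal.ofReal (R ^ ((finrank ℝ E : ℝ) + p)) *
        ∫⁻ x in ball (0 : E) 1, ENNReal.ofReal (‖x‖ ^ p) ∂μ := by
  have hRd : 0 < R ^ finrank ℝ E := by positivity
  have hμ : μ = ENNReal.ofReal (R ^ finrank ℝ E) • Measure.map (R • ·) μ := by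
    rw [Measure.map_addHaar_smul μ hR.ne', smul_smul, abs_of_pos (inv_pos.2 hRd),
      ← ENNReal.ofReal_mul hRd.le, mul_inv_cancel₀ hRd.ne', ENNReal.ofReal_one, one_smul]
  have hball : (R • ·) ⁻¹' ball (0 : E) R = ball 0 1 := by
    ext y
    simp [norm_smul, abs_of_pos hR, hR]
  have hmeas : Measurable fun x : E => ENNReal.ofReal (‖x‖ ^ p) := by fun_prop
  conv_lhs => rw [hμ]
  rw [Measure.restrict_smul, lintegral_smul_measure,
    setLIntegral_map measurableSet_ball hmeas (measurable_const_smul R), hball]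
  simp_rw [norm_smul, Real.norm_of_nonneg hR.le,
    Real.mul_rpow hR.le (norm_nonneg _), ENNReal.ofReal_mul (Real.rpow_nonneg hR.le _)]
  rw [lintegral_const_mul _ hmeas, smul_eq_mul, ← mul_assoc,
    ← ENNReal.ofReal_mul hRd.le, ← Real.rpow_natCast, ← Real.rpow_add hR]

lemma setLIntegral_ball_one_rpow_norm_lt_top (hd : 1 ≤ finrank ℝ E) {p : ℝ}
    (hp : -(finrank ℝ E : ℝ) < p) :
    ∫⁻ x in ball (0 : E) 1, ENNReal.ofReal (‖x‖ ^ p) ∂μ < ⊤ := by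
  refine IntegrableOn.setLIntegral_lt_top
    (integrableOn_ball_of_norm_le_rpow (C := 1) (α := -p) hd (by linarith) ?_
    (by fun_prop : Measurable fun x : E => ‖x‖ ^ p).aestronglyMeasurable)
  refine ae_of_all _ fun x => ?_
  rw [neg_neg, one_mul, Real.norm_of_nonneg (Real.rpow_nonneg (norm_nonneg x) p)]

lemma setLIntegral_ball_rpow_norm_le (a : E) {p : ℝ} (hp : p ≤ 0) {R : ℝ} (hR : 0 < R) :
    ∫⁻ x in ball a R, ENNReal.ofReal (‖x‖ ^ p) ∂μ ≤
      ENNReal.ofReal (R ^ ((finrank ℝ E : ℝ) + p)) *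
        (μ (ball 0 1) + ∫⁻ x in ball (0 : E) 1, ENNReal.ofReal (‖x‖ ^ p) ∂μ) := by
  have hpointwise : ∀ x : E, ENNReal.ofReal (‖x‖ ^ p) ≤
      ENNReal.ofReal (R ^ p) + (ball 0 R).indicator (fun y => ENNReal.ofReal (‖y‖ ^ p)) x := by
    intro x
    by_cases hx : x ∈ ball (0 : E) R
    · simp [Set.indicator_of_mem hx]
    · have hRx : R ≤ ‖x‖ := by simpa using hx
      rw [Set.indicator_of_notMem hx, add_zero]
      exact ENNReal.ofReal_le_ofReal (Real.rpow_le_rpow_of_nonpos hR hRx hp)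
  calc ∫⁻ x in ball a R, ENNReal.ofReal (‖x‖ ^ p) ∂μ
      ≤ ∫⁻ x in ball a R, ENNReal.ofReal (R ^ p) +
          (ball 0 R).indicator (fun y => ENNReal.ofReal (‖y‖ ^ p)) x ∂μ :=
        lintegral_mono hpointwise
    _ ≤ ENNReal.ofReal (R ^ p) * μ (ball a R) +
          ∫⁻ x, (ball 0 R).indicator (fun y => ENNReal.ofReal (‖y‖ ^ p)) x ∂μ := by
        rw [lintegral_add_left measurable_const, setLIntegral_const]
        gcongr
        exact Measure.restrict_le_self
    _ = ENNReal.ofReal (R ^ ((finrank ℝ E : ℝ) + p)) *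
        (μ (ball 0 1) + ∫⁻ x in ball (0 : E) 1, ENNReal.ofReal (‖x‖ ^ p) ∂μ) := by
        rw [lintegral_indicator measurableSet_ball, setLIntegral_ball_zero_rpow_norm μ p hR,
          Measure.addHaar_ball_of_pos μ a hR, mul_add, ← mul_assoc,
          ← ENNReal.ofReal_mul (Real.rpow_nonneg hR.le _), ← Real.rpow_natCast,
          ← Real.rpow_add hR, add_comm p]

end HaarRpowNorm

lemma morreyNorm_mono {n : ℕ} {p q : ℝ} (hp : 0 ≤ p) {f g : EuclideanSpace ℝ (Fin n) → ℝ}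
    (hfg : ∀ x, |f x| ≤ |g x|) : morreyNorm n p q f ≤ morreyNorm n p q g := by
  refine iSup₂_mono fun a R => iSup_mono fun _ => ?_
  gcongr _ * (∫⁻ x in _, ENNReal.ofReal (?_ ^ _)) ^ _ with x
  exact hfg x

lemma abs_besselRieszKernel_le_abs_rieszKernel (n : ℕ) (α : ℝ) {γ : ℝ} (hγ : 0 ≤ γ)
    (x : EuclideanSpace ℝ (Fin n)) : |besselRieszKernel n α γ x| ≤ |rieszKernel n α x| := by
  have hden : 1 ≤ (1 + ‖x‖) ^ γ := Real.one_le_rpow (by linarith [norm_nonneg x]) hγ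
  rw [besselRieszKernel, rieszKernel, abs_div, abs_of_pos (zero_lt_one.trans_le hden)]
  exact div_le_self (abs_nonneg _) hden

lemma morreyNorm_rieszKernel_lt_top {n : ℕ} (hn : 1 ≤ n) {α s : ℝ} (hαn : α < n) (hs : 0 < s)
    (hst : s < n / (n - α)) : morreyNorm n s (n / (n - α)) (rieszKernel n α) < ⊤ := by
  have hd : Module.finrank ℝ (EuclideanSpace ℝ (Fin n)) = n := finrank_euclideanSpace_fin
  have hnα : 0 < (n : ℝ) - α := by linarith
  set p := (α - n) * s with hp
  have hp0 : p ≤ 0 := mul_nonpos_of_nonpos_of_nonneg (by linarith) hs.le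
  have hpn : -(n : ℝ) < p := by
    have := (lt_div_iff₀ hnα).1 hst
    linarith
  set e := 1 / (n / (n - α)) - 1 / s
  set V := volume (ball (0 : EuclideanSpace ℝ (Fin n)) 1)
  set C := V + ∫⁻ x in ball (0 : EuclideanSpace ℝ (Fin n)) 1, ENNReal.ofReal (‖x‖ ^ p)
  have hV0 : V ≠ 0 := (measure_ball_pos volume 0 one_pos).ne'
  have hC0 : C ≠ 0 := by simp [C, hV0]
  have hCtop : C ≠ ⊤ := ENNReal.add_ne_top.2 ⟨measure_ball_lt_top.ne,
    (setLIntegral_ball_one_rpow_norm_lt_top volume (by rwa [hd]) (by rwa [hd])).ne⟩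
  have hexp : (n : ℝ) * e + ((n : ℝ) + p) * (1 / s) = 0 := by
    simp only [e, hp]
    field_simp
    ring
  refine lt_of_le_of_lt ?_ (ENNReal.mul_lt_top
    (ENNReal.rpow_ne_top_of_ne_zero (y := e) hV0 measure_ball_lt_top.ne).lt_top
    (ENNReal.rpow_lt_top_of_nonneg (one_div_nonneg.2 hs.le) hCtop))
  refine iSup₂_le fun a R => iSup_le fun hR => ?_
  have hRn : ENNReal.ofReal (R ^ n) ≠ 0 := by simp [hR]
  have hRnp : ENNReal.ofReal (R ^ ((n : ℝ) + p)) ≠ 0 := by simp [Real.rpow_pos_of_pos hR]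
  have hintegral := setLIntegral_ball_rpow_norm_le volume a hp0 hR
  rw [hd] at hintegral
  calc volume (ball a R) ^ e *
        (∫⁻ x in ball a R, ENNReal.ofReal (|rieszKernel n α x| ^ s)) ^ (1 / s)
      = (ENNReal.ofReal (R ^ n) * V) ^ e *
        (∫⁻ x in ball a R, ENNReal.ofReal (‖x‖ ^ p)) ^ (1 / s) := by
        simp_rw [Measure.addHaar_ball_of_pos volume a hR, hd, rieszKernel,
          abs_of_nonneg (Real.rpow_nonneg (norm_nonneg _) _), ← Real.rpow_mul (norm_nonneg _)]
        rfl
    _ ≤ (ENNReal.ofReal (R ^ n) * V) ^ e * (ENNReal.ofReal (R ^ ((n : ℝ) + p)) * C) ^ (1 / s) := by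
        gcongr
    _ = ENNReal.ofReal (R ^ n) ^ e * ENNReal.ofReal (R ^ ((n : ℝ) + p)) ^ (1 / s) *
        (V ^ e * C ^ (1 / s)) := by
        rw [ENNReal.mul_rpow_of_ne_zero hRn hV0, ENNReal.mul_rpow_of_ne_zero hRnp hC0]
        ring
    _ = V ^ e * C ^ (1 / s) := by
        rw [ENNReal.ofReal_rpow_of_pos (by positivity), ENNReal.ofReal_rpow_of_pos (by positivity),
          ← ENNReal.ofReal_mul (by positivity), ← Real.rpow_natCast, ← Real.rpow_mul hR.le,
          ← Real.rpow_mul hR.le, ← Real.rpow_add hR, hexp, Real.rpow_zero, ENNReal.ofReal_one,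
          one_mul]

theorem besselRieszKernel_mem_morrey_general (n : ℕ) (hn : 1 ≤ n) (α γ s t : ℝ)
    (hαn : α < n) (hγ : 0 < γ)
    (ht : t = n / (n - α)) (hs1 : 1 ≤ s) (hst : s < t) :
    morreyNorm n s t (besselRieszKernel n α γ) ≤ morreyNorm n s t (rieszKernel n α) ∧
      morreyNorm n s t (rieszKernel n α) < ⊤ := by
  have hs : 0 < s := by linarith
  subst ht
  exact ⟨morreyNorm_mono hs.le (abs_besselRieszKernel_le_abs_rieszKernel n α hγ.le),
    morreyNorm_rieszKernel_lt_top hn hαn hs hst⟩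

/-- For `n ≥ 1`, `0 < α < n`, `γ > 0`, the Bessel-Riesz kernel `K_{α,γ}`
belongs to `L^{s,t}(ℝⁿ)` for every `1 ≤ s < t = n/(n-α)`, with
`‖K_{α,γ}‖_{L^{s,t}} ≤ ‖K_α‖_{L^{s,t}} < ∞`. -/
theorem besselRieszKernel_mem_morrey (n : ℕ) (hn : 1 ≤ n) (α γ s t : ℝ)
    (hα0 : 0 < α) (hαn : α < n) (hγ : 0 < γ)
    (ht : t = n / (n - α)) (hs1 : 1 ≤ s) (hst : s < t) :
    morreyNorm n s t (besselRieszKernel n α γ) ≤ morreyNorm n s t (rieszKernel n α) ∧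
      morreyNorm n s t (rieszKernel n α) < ⊤ :=
  besselRieszKernel_mem_morrey_general n hn α γ s t hαn hγ ht hs1 hst
end

section
/- Let n ≥ 1 be an integer, 0 < α < n and γ > 0. Then the Bessel-Riesz kernel K_{α,γ}(x) = |x|^{α−n}/(1+|x|)^γ belongs to the Lebesgue space L^t(ℝⁿ) for every t with n/(n+γ−α) < t < n/(n−α); that is, ∫_{ℝⁿ} (|x|^{α−n}/(1+|x|)^γ)^t dx < ∞ for such t. -/
open MeasureTheory Metric
open scoped ENNReal NNReal

/-!
Write `K^t = ‖x‖^(-(n-α)t) (1+‖x‖)^(-γt)`. On the unit ball the second factor is at most `1`,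
and `‖x‖^(-(n-α)t)` is integrable there because `(n-α)t < n`. Off the unit ball
`‖x‖ ≥ (1+‖x‖)/2`, so `K^t ≤ 2^((n-α)t) (1+‖x‖)^(-(n+γ-α)t)`, which is integrable because
`(n+γ-α)t > n`.
-/

open Module

theorem Real.rpow_neg_le_two_rpow_mul_one_add_rpow_neg {s p : ℝ} (hs : 1 ≤ s) (hp : 0 ≤ p) :
    s ^ (-p) ≤ 2 ^ p * (1 + s) ^ (-p) := by
  calc s ^ (-p) ≤ ((1 + s) / 2) ^ (-p) :=
        Real.rpow_le_rpow_of_nonpos (by positivity) (by linarith) (neg_nonpos.mpr hp)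
    _ = 2 ^ p * (1 + s) ^ (-p) := by
        rw [Real.div_rpow (by positivity) zero_le_two, Real.rpow_neg zero_le_two, div_eq_mul_inv,
          inv_inv, mul_comm]

section

variable {E : Type*} [NormedAddCommGroup E] [NormedSpace ℝ E] [FiniteDimensional ℝ E]
  [MeasurableSpace E] [BorelSpace E] {μ : Measure E} [μ.IsAddHaarMeasure]

theorem integrable_norm_rpow_neg_mul_one_add_norm_rpow_neg (hd : 1 ≤ finrank ℝ E) {p q : ℝ}
    (hp₀ : 0 ≤ p) (hp : p < finrank ℝ E) (hpq : finrank ℝ E < p + q) :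
    Integrable (fun x : E ↦ ‖x‖ ^ (-p) * (1 + ‖x‖) ^ (-q)) μ := by
  have hq : 0 ≤ q := by linarith
  have hmeas : AEStronglyMeasurable (fun x : E ↦ ‖x‖ ^ (-p) * (1 + ‖x‖) ^ (-q)) μ := by
    fun_prop
  have h_ball : IntegrableOn (fun x : E ↦ ‖x‖ ^ (-p) * (1 + ‖x‖) ^ (-q)) (ball 0 1) μ := by
    refine integrableOn_ball_of_norm_le_rpow (C := 1) hd hp
      (Filter.Eventually.of_forall fun x ↦ ?_) hmeas
    rw [Real.norm_of_nonneg (by positivity), one_mul]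
    exact mul_le_of_le_one_right (by positivity)
      (Real.rpow_le_one_of_one_le_of_nonpos (by simp) (neg_nonpos.mpr hq))
  have h_compl : IntegrableOn (fun x : E ↦ ‖x‖ ^ (-p) * (1 + ‖x‖) ^ (-q)) (ball 0 1)ᶜ μ := by
    refine (((integrable_one_add_norm hpq).const_mul (2 ^ p)).integrableOn).mono' hmeas.restrict
      (ae_restrict_of_forall_mem measurableSet_ball.compl fun x hx ↦ ?_)
    have hx : 1 ≤ ‖x‖ := by simpa using hx
    rw [Real.norm_of_nonneg (by positivity), neg_add, Real.rpow_add (by positivity), ← mul_assoc]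
    gcongr
    exact Real.rpow_neg_le_two_rpow_mul_one_add_rpow_neg hx hp₀
  simpa using h_ball.union h_compl

end

theorem besselRieszKernel_rpow_eq (n : ℕ) (α γ t : ℝ) (x : EuclideanSpace ℝ (Fin n)) :
    besselRieszKernel n α γ x ^ t = ‖x‖ ^ (-((n - α) * t)) * (1 + ‖x‖) ^ (-(γ * t)) := by
  rw [besselRieszKernel, Real.div_rpow (by positivity) (by positivity),
    ← Real.rpow_mul (by positivity), ← Real.rpow_mul (by positivity), div_eq_mul_inv,
    ← Real.rpow_neg (by positivity)]
  ring_nf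

theorem besselRieszKernel_mem_Lt_general (n : ℕ) (hn : 1 ≤ n) (α γ t : ℝ)
    (hαn : α < n) (hγ : 0 < γ)
    (ht1 : (n : ℝ) / (n + γ - α) < t) (ht2 : t < n / (n - α)) :
    ∫⁻ x : EuclideanSpace ℝ (Fin n),
      ENNReal.ofReal (besselRieszKernel n α γ x ^ t) < ⊤ := by
  have hnα : 0 < (n : ℝ) - α := by linarith
  have hden : 0 < (n : ℝ) + γ - α := by linarith
  have ht : 0 < t := lt_trans (div_pos (by exact_mod_cast hn) hden) ht1
  have hlocal : (n - α) * t < n := by rwa [lt_div_iff₀ hnα, mul_comm] at ht2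
  have hdecay : (n : ℝ) < (n - α) * t + γ * t := by
    rw [div_lt_iff₀ hden] at ht1
    linarith
  simp_rw [besselRieszKernel_rpow_eq]
  exact Integrable.lintegral_lt_top <|
    integrable_norm_rpow_neg_mul_one_add_norm_rpow_neg (by simpa using hn) (by positivity)
      (by simpa using hlocal) (by simpa using hdecay)

/-- For `n ≥ 1`, `0 < α < n`, `γ > 0`, the Bessel-Riesz kernel `K_{α,γ}`
belongs to `L^t(ℝⁿ)` for every `n/(n+γ-α) < t < n/(n-α)`:
`∫_{ℝⁿ} (|x|^{α-n}/(1+|x|)^γ)^t dx < ∞`. -/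
theorem besselRieszKernel_mem_Lt (n : ℕ) (hn : 1 ≤ n) (α γ t : ℝ)
    (hα0 : 0 < α) (hαn : α < n) (hγ : 0 < γ)
    (ht1 : (n : ℝ) / (n + γ - α) < t) (ht2 : t < n / (n - α)) :
    ∫⁻ x : EuclideanSpace ℝ (Fin n),
      ENNReal.ofReal (besselRieszKernel n α γ x ^ t) < ⊤ :=
  besselRieszKernel_mem_Lt_general n hn α γ t hαn hγ ht1 ht2
end

section
/- Let n ≥ 1 be an integer, 0 < α < n and γ > 0. Suppose n/(n+γ−α) < t < n/(n−α), 1 ≤ p < t', and 1/q = 1/p − 1/t', where t' is the conjugate exponent of t. Then for every f ∈ L^p(ℝⁿ), the Bessel-Riesz operator satisfies ||I_{α,γ}f||_{L^q} ≤ ||K_{α,γ}||_{L^t} ||f||_{L^p}; in particular I_{α,γ} is bounded from L^p(ℝⁿ) to L^q(ℝⁿ) with operator norm at most ||K_{α,γ}||_{L^t}. -/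
open MeasureTheory Metric
open scoped ENNReal NNReal

/-! Young's convolution inequality for the kernel. For fixed `x`, Hölder's inequality with the three
exponents `q`, `(1/t - 1/q)⁻¹`, `(1/p - 1/q)⁻¹` applied to the factorization
`K(x-y) |f y| = (K(x-y)ᵗ |f y|ᵖ)^(1/q) (K(x-y)ᵗ)^(1/t - 1/q) (|f y|ᵖ)^(1/p - 1/q)` gives
`|I f x|^q ≤ (∫ K(x-y)ᵗ |f y|ᵖ dy) ‖K‖ₜ^(q-t) ‖f‖ₚ^(q-p)`, using translation invariance of
the measure. Integrating in `x` with Tonelli yields `‖I f‖_q^q ≤ ‖K‖ₜ^q ‖f‖ₚ^q`. -/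

namespace ENNReal

theorem rpow_rpow_mul_rpow_rpow_of_mul_add_eq_one (A : ℝ≥0∞) {r a b : ℝ} (ha : 0 ≤ a) (hb : 0 ≤ b)
    (h : r * (a + b) = 1) : (A ^ r) ^ a * (A ^ r) ^ b = A := by
  rw [← rpow_add_of_nonneg _ _ ha hb, ← rpow_mul, h, rpow_one]

theorem lintegral_mul_mul_rpow_le {α : Type*} [MeasurableSpace α] {μ : Measure α}
    {f g h : α → ℝ≥0∞} (hf : AEMeasurable f μ) (hg : AEMeasurable g μ) (hh : AEMeasurable h μ)
    {a b c : ℝ} (ha : 0 ≤ a) (hb : 0 ≤ b) (hc : 0 ≤ c) (habc : a + b + c = 1) :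
    ∫⁻ x, f x ^ a * g x ^ b * h x ^ c ∂μ ≤
      (∫⁻ x, f x ∂μ) ^ a * (∫⁻ x, g x ∂μ) ^ b * (∫⁻ x, h x ∂μ) ^ c := by
  have holder := lintegral_prod_norm_pow_le (μ := μ) Finset.univ (f := ![f, g, h]) (p := ![a, b, c])
    (fun i _ => by fin_cases i <;> assumption) (by simpa [Fin.sum_univ_three] using habc)
    (fun i _ => by fin_cases i <;> assumption)
  simpa [Fin.prod_univ_three, mul_assoc] using holder

end ENNReal

theorem lintegral_mul_le_of_young_exponents {α : Type*} [MeasurableSpace α] {μ : Measure α}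
    {t p q : ℝ} {u v : α → ℝ≥0∞} (hu : AEMeasurable u μ)
    (hv : AEMeasurable v μ) (ht : 0 < t) (hp : 0 < p) (hq : 0 < q) (hqt : 1 / q ≤ 1 / t)
    (hqp : 1 / q ≤ 1 / p) (htpq : 1 / t + 1 / p = 1 + 1 / q) :
    ∫⁻ x, u x * v x ∂μ ≤ (∫⁻ x, u x ^ t * v x ^ p ∂μ) ^ (1 / q) *
      ((∫⁻ x, u x ^ t ∂μ) ^ (1 / t - 1 / q) * (∫⁻ x, v x ^ p ∂μ) ^ (1 / p - 1 / q)) := by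
  have hq' : 0 ≤ 1 / q := by positivity
  have hsplit : ∀ x, u x * v x = (u x ^ t * v x ^ p) ^ (1 / q) * (u x ^ t) ^ (1 / t - 1 / q) *
      (v x ^ p) ^ (1 / p - 1 / q) := fun x => by
    conv_lhs => rw [← ENNReal.rpow_rpow_mul_rpow_rpow_of_mul_add_eq_one (u x) (r := t) hq'
      (sub_nonneg.2 hqt) (by field_simp; ring), ← ENNReal.rpow_rpow_mul_rpow_rpow_of_mul_add_eq_one
      (v x) (r := p) hq' (sub_nonneg.2 hqp) (by field_simp; ring)]
    rw [ENNReal.mul_rpow_of_nonneg _ _ hq']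
    ring
  rw [lintegral_congr hsplit, ← mul_assoc]
  exact ENNReal.lintegral_mul_mul_rpow_le ((hu.pow_const t).mul (hv.pow_const p))
    (hu.pow_const t) (hv.pow_const p) hq' (sub_nonneg.2 hqt) (sub_nonneg.2 hqp) (by linarith)

theorem eLpNorm_ofReal_eq_lintegral {α ε : Type*} [MeasurableSpace α] [ENorm ε] {μ : Measure α}
    {f : α → ε} {p : ℝ} (hp : 0 < p) :
    eLpNorm f (ENNReal.ofReal p) μ = (∫⁻ x, ‖f x‖ₑ ^ p ∂μ) ^ (1 / p) := by
  rw [eLpNorm_eq_lintegral_rpow_enorm_toReal (by simpa using hp) ENNReal.ofReal_ne_top,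
    ENNReal.toReal_ofReal hp.le]

section Convolution

variable {G : Type*} [MeasurableSpace G] [AddGroup G] [MeasurableAdd₂ G] [MeasurableNeg G]
  {μ : Measure G} [SFinite μ] [μ.IsAddLeftInvariant] [μ.IsAddRightInvariant] [μ.IsNegInvariant]
  {t p q : ℝ}

theorem lintegral_lintegral_mul_sub_rpow_le {g h : G → ℝ≥0∞} (hg : Measurable g)
    (hh : Measurable h) (ht : 1 ≤ t) (hp : 1 ≤ p) (hq : 0 < q)
    (htpq : 1 / t + 1 / p = 1 + 1 / q) :
    (∫⁻ x, (∫⁻ y, g (x - y) * h y ∂μ) ^ q ∂μ) ^ (1 / q) ≤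
      (∫⁻ x, g x ^ t ∂μ) ^ (1 / t) * (∫⁻ x, h x ^ p ∂μ) ^ (1 / p) := by
  have hqt : 1 / q ≤ 1 / t := by linarith [(div_le_one (by linarith : (0 : ℝ) < p)).2 hp]
  have hqp : 1 / q ≤ 1 / p := by linarith [(div_le_one (by linarith : (0 : ℝ) < t)).2 ht]
  set A := ∫⁻ x, g x ^ t ∂μ
  set B := ∫⁻ x, h x ^ p ∂μ
  set c := A ^ (1 / t - 1 / q) * B ^ (1 / p - 1 / q)
  have hg_sub : Measurable fun z : G × G => g (z.1 - z.2) ^ t * h z.2 ^ p :=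
    ((hg.comp (measurable_fst.sub measurable_snd)).pow_const t).mul
      ((hh.comp measurable_snd).pow_const p)
  have pointwise : ∀ x, (∫⁻ y, g (x - y) * h y ∂μ) ^ q ≤
      (∫⁻ y, g (x - y) ^ t * h y ^ p ∂μ) * c ^ q := fun x => by
    have holder := lintegral_mul_le_of_young_exponents (μ := μ) (u := fun y => g (x - y))
      (by fun_prop) hh.aemeasurable (by linarith) (by linarith) hq hqt hqp htpq
    rw [(μ.measurePreserving_sub_left x).lintegral_comp (hg.pow_const t)] at holder
    calc (∫⁻ y, g (x - y) * h y ∂μ) ^ q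
        ≤ ((∫⁻ y, g (x - y) ^ t * h y ^ p ∂μ) ^ (1 / q) * c) ^ q := by gcongr
      _ = (∫⁻ y, g (x - y) ^ t * h y ^ p ∂μ) * c ^ q := by
        rw [ENNReal.mul_rpow_of_nonneg _ _ hq.le, ← ENNReal.rpow_mul, one_div_mul_cancel hq.ne',
          ENNReal.rpow_one]
  have tonelli : ∫⁻ x, ∫⁻ y, g (x - y) ^ t * h y ^ p ∂μ ∂μ = A * B := by
    rw [lintegral_lintegral_swap hg_sub.aemeasurable, ← lintegral_const_mul _ (hh.pow_const p)]
    refine lintegral_congr fun y => ?_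
    rw [lintegral_mul_const _ (by fun_prop),
      lintegral_sub_right_eq_self (fun x => g x ^ t) y]
  calc (∫⁻ x, (∫⁻ y, g (x - y) * h y ∂μ) ^ q ∂μ) ^ (1 / q)
      ≤ (A * B * c ^ q) ^ (1 / q) := by
        rw [← tonelli, ← lintegral_mul_const _ hg_sub.lintegral_prod_right']
        gcongr with x
        exact pointwise x
    _ = A ^ (1 / q) * A ^ (1 / t - 1 / q) * (B ^ (1 / q) * B ^ (1 / p - 1 / q)) := by
        rw [ENNReal.mul_rpow_of_nonneg _ _ (by positivity), ENNReal.mul_rpow_of_nonneg _ _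
          (by positivity), ← ENNReal.rpow_mul, mul_one_div_cancel hq.ne', ENNReal.rpow_one]
        ring
    _ = A ^ (1 / t) * B ^ (1 / p) := by
        rw [← ENNReal.rpow_add_of_nonneg _ _ (by positivity) (sub_nonneg.2 hqt),
          ← ENNReal.rpow_add_of_nonneg _ _ (by positivity) (sub_nonneg.2 hqp)]
        ring_nf

theorem eLpNorm_integral_mul_sub_le {E : Type*} [NormedRing E] [NormedSpace ℝ E] {g f : G → E}
    (hg : StronglyMeasurable g) (hf : StronglyMeasurable f) (ht : 1 ≤ t) (hp : 1 ≤ p) (hq : 0 < q)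
    (htpq : 1 / t + 1 / p = 1 + 1 / q) :
    eLpNorm (fun x => ∫ y, g (x - y) * f y ∂μ) (ENNReal.ofReal q) μ ≤
      eLpNorm g (ENNReal.ofReal t) μ * eLpNorm f (ENNReal.ofReal p) μ := by
  rw [eLpNorm_ofReal_eq_lintegral hq, eLpNorm_ofReal_eq_lintegral (by linarith),
    eLpNorm_ofReal_eq_lintegral (by linarith)]
  refine le_trans ?_ (lintegral_lintegral_mul_sub_rpow_le hg.enorm hf.enorm ht hp hq htpq)
  gcongr with x
  calc ‖∫ y, g (x - y) * f y ∂μ‖ₑ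
      ≤ ∫⁻ y, ‖g (x - y) * f y‖ₑ ∂μ := enorm_integral_le_lintegral_enorm _
    _ ≤ ∫⁻ y, ‖g (x - y)‖ₑ * ‖f y‖ₑ ∂μ := by
      gcongr with y
      simpa only [enorm_eq_nnnorm, ← ENNReal.coe_mul] using
        ENNReal.coe_le_coe.2 (nnnorm_mul_le (g (x - y)) (f y))

end Convolution

theorem besselRiesz_young_general (n : ℕ) (α γ t t' p q : ℝ)
    (ht' : 1 / t + 1 / t' = 1) (hp1 : 1 ≤ p) (hpt : p < t')
    (hq : 1 / q = 1 / p - 1 / t') :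
    ∀ f : EuclideanSpace ℝ (Fin n) → ℝ, Measurable f →
      eLpNorm f (ENNReal.ofReal p) volume ≠ ⊤ →
      eLpNorm (besselRiesz n α γ f) (ENNReal.ofReal q) volume ≤
        eLpNorm (besselRieszKernel n α γ) (ENNReal.ofReal t) volume *
          eLpNorm f (ENNReal.ofReal p) volume := by
  intro f hf _
  have hp0 : 0 < p := by linarith
  have ht'_pos : 0 < 1 / t' := one_div_pos.2 (by linarith)
  have ht'_lt : 1 / t' < 1 / p := one_div_lt_one_div_of_lt hp0 hpt
  have hp_le : 1 / p ≤ 1 := (div_le_one hp0).2 hp1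
  have ht0 : 0 < t := one_div_pos.1 (by linarith)
  have ht1 : 1 ≤ t := (div_le_one ht0).1 (by linarith)
  have hq0 : 0 < q := one_div_pos.1 (by linarith)
  have hK : Measurable (besselRieszKernel n α γ) := by
    unfold besselRieszKernel
    fun_prop
  exact eLpNorm_integral_mul_sub_le hK.stronglyMeasurable hf.stronglyMeasurable ht1 hp1 hq0
    (by linarith)

/-- Young's inequality for the Bessel-Riesz operator: for `n ≥ 1`,
`0 < α < n`, `γ > 0`, `n/(n+γ-α) < t < n/(n-α)`, `1 ≤ p < t'`, `1/q = 1/p - 1/t'`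
(where `1/t + 1/t' = 1`), one has
`‖I_{α,γ} f‖_{L^q} ≤ ‖K_{α,γ}‖_{L^t} ‖f‖_{L^p}` for every `f ∈ L^p(ℝⁿ)`. -/
theorem besselRiesz_young (n : ℕ) (hn : 1 ≤ n) (α γ t t' p q : ℝ)
    (hα0 : 0 < α) (hαn : α < n) (hγ : 0 < γ)
    (ht1 : (n : ℝ) / (n + γ - α) < t) (ht2 : t < n / (n - α))
    (ht' : 1 / t + 1 / t' = 1) (hp1 : 1 ≤ p) (hpt : p < t')
    (hq : 1 / q = 1 / p - 1 / t') :
    ∀ f : EuclideanSpace ℝ (Fin n) → ℝ, Measurable f →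
      eLpNorm f (ENNReal.ofReal p) volume ≠ ⊤ →
      eLpNorm (besselRiesz n α γ f) (ENNReal.ofReal q) volume ≤
        eLpNorm (besselRieszKernel n α γ) (ENNReal.ofReal t) volume *
          eLpNorm f (ENNReal.ofReal p) volume :=
  besselRiesz_young_general n α γ t t' p q ht' hp1 hpt hq
end

section
/- Let n ≥ 1 be an integer, 0 < α < n, γ ≥ 0, and 1 ≤ s ≤ t < ∞ with ||K_{α,γ}||_{L^{s,t}} < ∞. Then there exists a constant C > 0, depending only on n and s, such that for every x ∈ ℝⁿ with x ≠ 0, K_{α,γ}(x) ≤ C |x|^{−n/t} ||K_{α,γ}||_{L^{s,t}}. -/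
/-!
Fix `x ≠ 0` and let `B` be the ball of radius `‖x‖` about the origin. Since the kernel is radially
nonincreasing, it is at least `K(x)` almost everywhere on `B`, so the Morrey term of `B` alone gives
`K(x) |B|^{1/t} ≤ ‖K‖_{L^{s,t}}`. By scaling, `|B|^{-1/t} = |B(0,1)|^{-1/t} ‖x‖^{-n/t}`, and
`|B(0,1)|^{-1/t} ≤ max 1 |B(0,1)|^{-1/s}` because `0 < 1/t ≤ 1/s`.
-/

open MeasureTheory Metric
open scoped ENNReal NNReal

theorem Real.rpow_neg_le_max_one_rpow_neg {c a b : ℝ} (hc : 0 < c) (ha : 0 ≤ a) (hab : a ≤ b) :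
    c ^ (-a) ≤ max 1 (c ^ (-b)) := by
  rcases le_or_gt 1 c with hc1 | hc1
  · exact (Real.rpow_le_one_of_one_le_of_nonpos hc1 (neg_nonpos.mpr ha)).trans (le_max_left _ _)
  · exact (Real.rpow_le_rpow_of_exponent_ge hc hc1.le (neg_le_neg hab)).trans (le_max_right _ _)

section Morrey

variable {n : ℕ} {p q : ℝ} {f : EuclideanSpace ℝ (Fin n) → ℝ}

theorem le_morreyNorm (a : EuclideanSpace ℝ (Fin n)) {R : ℝ} (hR : 0 < R) :
    volume (ball a R) ^ (1 / q - 1 / p) *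
      (∫⁻ x in ball a R, ENNReal.ofReal (|f x| ^ p)) ^ (1 / p) ≤ morreyNorm n p q f :=
  le_iSup_of_le a <| le_iSup_of_le R <| le_iSup_of_le hR le_rfl

theorem ofReal_mul_volume_ball_rpow_le_morreyNorm {c : ℝ} (hp : 0 < p) (hc : 0 ≤ c)
    (a : EuclideanSpace ℝ (Fin n)) {R : ℝ} (hR : 0 < R)
    (hf : ∀ᵐ y ∂volume.restrict (ball a R), c ≤ |f y|) :
    ENNReal.ofReal c * volume (ball a R) ^ (1 / q) ≤ morreyNorm n p q f := by
  set v := volume (ball a R)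
  have hv0 : v ≠ 0 := (measure_ball_pos _ _ hR).ne'
  have hvtop : v ≠ ⊤ := measure_ball_lt_top.ne
  have hint : ENNReal.ofReal (c ^ p) * v ≤ ∫⁻ y in ball a R, ENNReal.ofReal (|f y| ^ p) := by
    rw [← setLIntegral_const]
    refine lintegral_mono_ae (hf.mono fun y hy => ?_)
    exact ENNReal.ofReal_le_ofReal (Real.rpow_le_rpow hc hy hp.le)
  calc ENNReal.ofReal c * v ^ (1 / q)
      = v ^ (1 / q - 1 / p) * (ENNReal.ofReal (c ^ p) * v) ^ (1 / p) := by
        rw [ENNReal.mul_rpow_of_ne_top ENNReal.ofReal_ne_top hvtop,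
          ENNReal.ofReal_rpow_of_nonneg (Real.rpow_nonneg hc p) (by positivity),
          ← Real.rpow_mul hc, mul_one_div_cancel hp.ne', Real.rpow_one, mul_left_comm,
          ← ENNReal.rpow_add _ _ hv0 hvtop, sub_add_cancel]
    _ ≤ v ^ (1 / q - 1 / p) * (∫⁻ y in ball a R, ENNReal.ofReal (|f y| ^ p)) ^ (1 / p) := by
        gcongr
    _ ≤ morreyNorm n p q f := le_morreyNorm a hR

end Morrey

section Volume

variable {E : Type*} [NormedAddCommGroup E] [NormedSpace ℝ E] [MeasurableSpace E] [BorelSpace E]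
  [FiniteDimensional ℝ E] [Nontrivial E] (μ : Measure E) [μ.IsAddHaarMeasure]

open Module in
theorem addHaar_ball_rpow_neg_le (a : E) {R s t : ℝ} (hR : 0 < R) (hs : 0 < s) (hst : s ≤ t) :
    μ (ball a R) ^ (-(1 / t)) ≤
      ENNReal.ofReal (max 1 ((μ (ball 0 1)).toReal ^ (-(1 / s))) * R ^ (-(finrank ℝ E / t))) := by
  set c := (μ (ball (0 : E) 1)).toReal
  have hc : 0 < c := ENNReal.toReal_pos (measure_ball_pos _ _ one_pos).ne' measure_ball_lt_top.ne
  have hball : μ (ball a R) = ENNReal.ofReal (R ^ finrank ℝ E * c) := by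
    rw [Measure.addHaar_ball μ a hR.le, ENNReal.ofReal_mul (by positivity),
      ENNReal.ofReal_toReal measure_ball_lt_top.ne]
  have hpow : (R ^ finrank ℝ E) ^ (-(1 / t)) = R ^ (-(finrank ℝ E / t)) := by
    rw [← Real.rpow_natCast, ← Real.rpow_mul hR.le]
    ring_nf
  rw [hball, ENNReal.ofReal_rpow_of_pos (mul_pos (pow_pos hR _) hc),
    Real.mul_rpow (by positivity) hc.le, hpow, mul_comm]
  gcongr
  exact Real.rpow_neg_le_max_one_rpow_neg hc (one_div_nonneg.mpr (hs.le.trans hst))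
    (one_div_le_one_div_of_le hs hst)

end Volume

section Kernel

variable {n : ℕ} {α γ : ℝ}

theorem besselRieszKernel_nonneg (x : EuclideanSpace ℝ (Fin n)) :
    0 ≤ besselRieszKernel n α γ x := by
  unfold besselRieszKernel; positivity

theorem besselRieszKernel_le_of_norm_le (hαn : α ≤ n) (hγ : 0 ≤ γ)
    {x y : EuclideanSpace ℝ (Fin n)} (hy : y ≠ 0) (hyx : ‖y‖ ≤ ‖x‖) :
    besselRieszKernel n α γ x ≤ besselRieszKernel n α γ y :=
  div_le_div₀ (by positivity)
    (Real.rpow_le_rpow_of_nonpos (norm_pos_iff.mpr hy) hyx (by linarith)) (by positivity)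
    (Real.rpow_le_rpow (by positivity) (by linarith) hγ)

theorem ofReal_besselRieszKernel_mul_volume_ball_rpow_le_morreyNorm {s t : ℝ}
    (hαn : α ≤ n) (hγ : 0 ≤ γ) (hs : 0 < s) {x : EuclideanSpace ℝ (Fin n)} (hx : x ≠ 0) :
    ENNReal.ofReal (besselRieszKernel n α γ x) *
        volume (ball (0 : EuclideanSpace ℝ (Fin n)) ‖x‖) ^ (1 / t) ≤
      morreyNorm n s t (besselRieszKernel n α γ) := by
  refine ofReal_mul_volume_ball_rpow_le_morreyNorm hs (besselRieszKernel_nonneg x) 0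
    (norm_pos_iff.mpr hx) ?_
  have : Nontrivial (EuclideanSpace ℝ (Fin n)) := ⟨⟨x, 0, hx⟩⟩
  filter_upwards [ae_restrict_mem measurableSet_ball, ae_restrict_of_ae (volume.ae_ne 0)]
    with y hyx hy0
  rw [abs_of_nonneg (besselRieszKernel_nonneg y)]
  exact besselRieszKernel_le_of_norm_le hαn hγ hy0 (mem_ball_zero_iff.mp hyx).le

end Kernel

theorem besselRieszKernel_pointwise_bound_general (n : ℕ) (α γ s t : ℝ)
    (hαn : α < n) (hγ : 0 ≤ γ)
    (hs : 1 ≤ s) (hst : s ≤ t) :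
    ∃ C : ℝ, 0 < C ∧ ∀ x : EuclideanSpace ℝ (Fin n), x ≠ 0 →
      ENNReal.ofReal (besselRieszKernel n α γ x) ≤
        ENNReal.ofReal (C * ‖x‖ ^ (-((n : ℝ) / t))) *
          morreyNorm n s t (besselRieszKernel n α γ) := by
  have hs0 : 0 < s := one_pos.trans_le hs
  refine ⟨max 1 ((volume (ball (0 : EuclideanSpace ℝ (Fin n)) 1)).toReal ^ (-(1 / s))),
    one_pos.trans_le (le_max_left _ _), fun x hx => ?_⟩
  have : Nontrivial (EuclideanSpace ℝ (Fin n)) := ⟨⟨x, 0, hx⟩⟩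
  set v := volume (ball (0 : EuclideanSpace ℝ (Fin n)) ‖x‖)
  have hv : v ^ (1 / t) ≠ 0 :=
    (ENNReal.rpow_pos (measure_ball_pos _ _ (norm_pos_iff.mpr hx)) measure_ball_lt_top.ne).ne'
  have hvtop : v ^ (1 / t) ≠ ⊤ :=
    ENNReal.rpow_ne_top_of_nonneg (one_div_nonneg.mpr (hs0.le.trans hst)) measure_ball_lt_top.ne
  calc ENNReal.ofReal (besselRieszKernel n α γ x)
      ≤ morreyNorm n s t (besselRieszKernel n α γ) / v ^ (1 / t) :=
        (ENNReal.le_div_iff_mul_le (.inl hv) (.inl hvtop)).mpr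
          (ofReal_besselRieszKernel_mul_volume_ball_rpow_le_morreyNorm hαn.le hγ hs0 hx)
    _ = v ^ (-(1 / t)) * morreyNorm n s t (besselRieszKernel n α γ) := by
        rw [ENNReal.div_eq_inv_mul, ENNReal.rpow_neg]
    _ ≤ _ := by
        have hball := addHaar_ball_rpow_neg_le volume (0 : EuclideanSpace ℝ (Fin n))
          (norm_pos_iff.mpr hx) hs0 hst
        rw [finrank_euclideanSpace_fin] at hball
        gcongr

/-- if `1 ≤ s ≤ t < ∞` and `‖K_{α,γ}‖_{L^{s,t}} < ∞`, then there is
`C > 0` depending only on `n` and `s` such that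
`K_{α,γ}(x) ≤ C |x|^{-n/t} ‖K_{α,γ}‖_{L^{s,t}}` for every `x ≠ 0`. -/
theorem besselRieszKernel_pointwise_bound (n : ℕ) (hn : 1 ≤ n) (α γ s t : ℝ)
    (hα0 : 0 < α) (hαn : α < n) (hγ : 0 ≤ γ)
    (hs : 1 ≤ s) (hst : s ≤ t)
    (hK : morreyNorm n s t (besselRieszKernel n α γ) < ⊤) :
    ∃ C : ℝ, 0 < C ∧ ∀ x : EuclideanSpace ℝ (Fin n), x ≠ 0 →
      ENNReal.ofReal (besselRieszKernel n α γ x) ≤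
        ENNReal.ofReal (C * ‖x‖ ^ (-((n : ℝ) / t))) *
          morreyNorm n s t (besselRieszKernel n α γ) :=
  besselRieszKernel_pointwise_bound_general n α γ s t hαn hγ hs hst
end

section
/- Let n ≥ 1 be an integer, 0 < α < n, γ ≥ 0, 1 ≤ p₁ < n/α, and let φ : (0,∞) → (0,∞) be of class G_{p₁}. Let 1 ≤ s < t = n/(n−α) with s < p₂ where 1/p₂ = 1/p₁ − 1/s', let t' be the conjugate exponent of t, and set ψ(r) := φ(r) r^{n/t'}. Then there exists a constant C > 0 such that for every f ∈ L^{p₁,φ}(ℝⁿ), every a ∈ ℝⁿ and R > 0, writing B = B(a,R) and f₁ := f·χ_{B(a,2R)}, one has ((1/|B|) ∫_B |I_{α,γ}f₁(x)|^{p₂} dx)^{1/p₂} ≤ C ψ(R) ||K_{α,γ}||_{L^{s,t}} ||f||_{L^{p₁,φ}}. -/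
open MeasureTheory Metric
open scoped ENNReal NNReal

/-! For `x ∈ B(a,R)` and `y ∈ B(a,2R)` we have `x - y ∈ B(0,3R)`, so on `B(a,R)` the operator
`I_{α,γ} f₁` is dominated by the convolution of `|f|·χ_{B(a,2R)}` with `K_{α,γ}·χ_{B(0,3R)}`.
Young's inequality (`1/p₁ + 1/s = 1 + 1/p₂`) bounds its `L^{p₂}` norm by
`‖f‖_{L^{p₁}(B(a,2R))} ‖K_{α,γ}‖_{L^s(B(0,3R))}`. The Morrey norms control these two factors by
`φ(2R) |B(a,2R)|^{1/p₁}` and `|B(0,3R)|^{1/s - 1/t}`; after dividing by `|B(a,R)|^{1/p₂}` the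
powers of `R` add up to `R^{n/t'}`, and `φ(2R) ≲ φ(R)` because `φ` is almost decreasing. -/

theorem ENNReal.lintegral_rpow_mul_rpow_mul_rpow_le {α : Type*} [MeasurableSpace α]
    {μ : Measure α} {f g h : α → ℝ≥0∞} (hf : AEMeasurable f μ) (hg : AEMeasurable g μ)
    (hh : AEMeasurable h μ) {a b c : ℝ} (ha : 0 ≤ a) (hb : 0 ≤ b) (hc : 0 ≤ c)
    (habc : a + b + c = 1) :
    ∫⁻ x, f x ^ a * g x ^ b * h x ^ c ∂μ ≤
      (∫⁻ x, f x ∂μ) ^ a * (∫⁻ x, g x ∂μ) ^ b * (∫⁻ x, h x ∂μ) ^ c := by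
  have := ENNReal.lintegral_prod_norm_pow_le (μ := μ) Finset.univ (f := ![f, g, h])
    (p := ![a, b, c]) (by simp [Fin.forall_fin_succ, hf, hg, hh])
    (by simp [Fin.sum_univ_three, habc]) (by simp [Fin.forall_fin_succ, ha, hb, hc])
  simpa [Fin.prod_univ_three, mul_assoc] using this

theorem Real.le_of_one_div_add_one_div_eq {p q r : ℝ} (hp : 0 < p) (hq : 1 ≤ q) (hr : 0 < r)
    (hpqr : 1 / p + 1 / q = 1 + 1 / r) : p ≤ r := by
  have : 1 / q ≤ 1 := (div_le_one (by linarith)).mpr hq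
  exact (one_div_le_one_div hr hp).mp (by linarith)

namespace MeasureTheory

variable {G : Type*} [MeasurableSpace G] [AddCommGroup G] [MeasurableAdd₂ G] [MeasurableNeg G]
  {μ : Measure G} [μ.IsAddLeftInvariant] [μ.IsNegInvariant] {f g : G → ℝ≥0∞} {p q r : ℝ}

theorem lconvolution_rpow_le (hf : Measurable f) (hg : Measurable g) (hp : 1 ≤ p) (hq : 1 ≤ q)
    (hr : 0 < r) (hpqr : 1 / p + 1 / q = 1 + 1 / r) (x : G) :
    (f ⋆ₗ[μ] g) x ^ r ≤ (∫⁻ y, f y ^ p * g (-y + x) ^ q ∂μ) *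
      ((∫⁻ y, f y ^ p ∂μ) ^ (r / p - 1) * (∫⁻ y, g y ^ q ∂μ) ^ (r / q - 1)) := by
  have hp0 : 0 < p := by linarith
  have hq0 : 0 < q := by linarith
  have hpr : 0 ≤ 1 / p - 1 / r := sub_nonneg.mpr <| one_div_le_one_div_of_le hp0 <|
    Real.le_of_one_div_add_one_div_eq hp0 hq hr hpqr
  have hqr : 0 ≤ 1 / q - 1 / r := sub_nonneg.mpr <| one_div_le_one_div_of_le hq0 <|
    Real.le_of_one_div_add_one_div_eq hq0 hp hr (by rw [add_comm, hpqr])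
  -- Hölder with the three exponents `r`, `(1/p - 1/r)⁻¹`, `(1/q - 1/r)⁻¹` applies to this splitting
  have hsplit : ∀ A B : ℝ≥0∞, A * B =
      (A ^ p * B ^ q) ^ (1 / r) * (A ^ p) ^ (1 / p - 1 / r) * (B ^ q) ^ (1 / q - 1 / r) := by
    intro A B
    rw [ENNReal.mul_rpow_of_nonneg _ _ (by positivity)]
    simp only [← ENNReal.rpow_mul]
    calc A * B
        = A ^ (p * (1 / r) + p * (1 / p - 1 / r)) * B ^ (q * (1 / r) + q * (1 / q - 1 / r)) := by
          rw [← mul_add, ← mul_add, add_sub_cancel, add_sub_cancel, mul_one_div_cancel hp0.ne',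
            mul_one_div_cancel hq0.ne', ENNReal.rpow_one, ENNReal.rpow_one]
      _ = _ := by
          rw [ENNReal.rpow_add_of_nonneg _ _ (by positivity) (by positivity),
            ENNReal.rpow_add_of_nonneg _ _ (by positivity) (by positivity)]
          ring
  have htrans : ∫⁻ y, g (-y + x) ^ q ∂μ = ∫⁻ y, g y ^ q ∂μ := by
    simp_rw [neg_add_eq_sub]
    exact lintegral_sub_left_eq_self (fun y ↦ g y ^ q) x
  have hgx : Measurable fun y ↦ g (-y + x) := hg.comp (measurable_neg.add_const x)
  calc (f ⋆ₗ[μ] g) x ^ r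
      = (∫⁻ y, (f y ^ p * g (-y + x) ^ q) ^ (1 / r) * (f y ^ p) ^ (1 / p - 1 / r) *
          (g (-y + x) ^ q) ^ (1 / q - 1 / r) ∂μ) ^ r := by
        simp only [lconvolution_def, ← hsplit]
    _ ≤ ((∫⁻ y, f y ^ p * g (-y + x) ^ q ∂μ) ^ (1 / r) * (∫⁻ y, f y ^ p ∂μ) ^ (1 / p - 1 / r) *
          (∫⁻ y, g (-y + x) ^ q ∂μ) ^ (1 / q - 1 / r)) ^ r := by
        gcongr
        exact ENNReal.lintegral_rpow_mul_rpow_mul_rpow_le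
          ((hf.pow_const p).mul (hgx.pow_const q)).aemeasurable (hf.pow_const p).aemeasurable
          (hgx.pow_const q).aemeasurable (by positivity) hpr hqr (by linarith)
    _ = _ := by
        rw [htrans, ENNReal.mul_rpow_of_nonneg _ _ hr.le, ENNReal.mul_rpow_of_nonneg _ _ hr.le,
          ← ENNReal.rpow_mul, ← ENNReal.rpow_mul, ← ENNReal.rpow_mul, one_div_mul_cancel hr.ne',
          ENNReal.rpow_one, mul_assoc]
        congr 3 <;> field_simp

theorem lintegral_lconvolution_rpow_le [SFinite μ] (hf : Measurable f) (hg : Measurable g)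
    (hp : 1 ≤ p) (hq : 1 ≤ q) (hr : 0 < r) (hpqr : 1 / p + 1 / q = 1 + 1 / r) :
    ∫⁻ x, (f ⋆ₗ[μ] g) x ^ r ∂μ ≤ (∫⁻ x, f x ^ p ∂μ) ^ (r / p) * (∫⁻ x, g x ^ q ∂μ) ^ (r / q) := by
  set Ip := ∫⁻ x, f x ^ p ∂μ
  set Iq := ∫⁻ x, g x ^ q ∂μ
  have hpr : 0 ≤ r / p - 1 := sub_nonneg.mpr <| (one_le_div (by linarith)).mpr <|
    Real.le_of_one_div_add_one_div_eq (by linarith) hq hr hpqr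
  have hqr : 0 ≤ r / q - 1 := sub_nonneg.mpr <| (one_le_div (by linarith)).mpr <|
    Real.le_of_one_div_add_one_div_eq (by linarith) hp hr (by rw [add_comm, hpqr])
  have hprod : Measurable (Function.uncurry fun x y ↦ f y ^ p * g (-y + x) ^ q) :=
    ((hf.comp measurable_snd).pow_const p).mul
      ((hg.comp (measurable_snd.neg.add measurable_fst)).pow_const q)
  have hinner : Measurable fun x ↦ ∫⁻ y, f y ^ p * g (-y + x) ^ q ∂μ :=
    hprod.lintegral_prod_right'
  have hfubini : ∫⁻ x, ∫⁻ y, f y ^ p * g (-y + x) ^ q ∂μ ∂μ = Ip * Iq := by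
    rw [lintegral_lintegral_swap hprod.aemeasurable, ← lintegral_mul_const _ (hf.pow_const p)]
    refine lintegral_congr fun y ↦ ?_
    rw [lintegral_const_mul _ (by fun_prop : Measurable fun x ↦ g (-y + x) ^ q)]
    congr 1
    exact lintegral_add_left_eq_self (fun z ↦ g z ^ q) (-y)
  calc ∫⁻ x, (f ⋆ₗ[μ] g) x ^ r ∂μ
      ≤ ∫⁻ x, (∫⁻ y, f y ^ p * g (-y + x) ^ q ∂μ) * (Ip ^ (r / p - 1) * Iq ^ (r / q - 1)) ∂μ :=
        lintegral_mono fun x ↦ lconvolution_rpow_le hf hg hp hq hr hpqr x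
    _ = Ip ^ (1 : ℝ) * Ip ^ (r / p - 1) * (Iq ^ (1 : ℝ) * Iq ^ (r / q - 1)) := by
        rw [lintegral_mul_const _ hinner, hfubini, ENNReal.rpow_one, ENNReal.rpow_one]
        ring
    _ = Ip ^ (r / p) * Iq ^ (r / q) := by
        rw [← ENNReal.rpow_add_of_nonneg _ _ zero_le_one hpr,
          ← ENNReal.rpow_add_of_nonneg _ _ zero_le_one hqr, add_sub_cancel, add_sub_cancel]

end MeasureTheory

theorem lintegral_indicator_rpow {α : Type*} [MeasurableSpace α] {μ : Measure α} {s : Set α}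
    (hs : MeasurableSet s) (f : α → ℝ≥0∞) {p : ℝ} (hp : 0 < p) :
    ∫⁻ x, s.indicator f x ^ p ∂μ = ∫⁻ x in s, f x ^ p ∂μ := by
  rw [← lintegral_indicator hs]
  refine lintegral_congr fun x ↦ ?_
  by_cases hx : x ∈ s <;> simp [hx, hp]

theorem toReal_measure_ball_pos {X : Type*} [PseudoMetricSpace X] [ProperSpace X]
    [MeasurableSpace X] (μ : Measure X) [μ.IsOpenPosMeasure] [IsFiniteMeasureOnCompacts μ]
    (x : X) {r : ℝ} (hr : 0 < r) : 0 < (μ (ball x r)).toReal :=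
  ENNReal.toReal_pos (measure_ball_pos μ x hr).ne' measure_ball_lt_top.ne

section

variable {n : ℕ}

theorem EuclideanSpace.volume_ball_rpow (x : EuclideanSpace ℝ (Fin n)) {r : ℝ} (hr : 0 < r)
    (e : ℝ) : volume (ball x r) ^ e = ENNReal.ofReal
      ((volume (ball (0 : EuclideanSpace ℝ (Fin n)) 1)).toReal ^ e * r ^ (n * e)) := by
  have hω_top : volume (ball (0 : EuclideanSpace ℝ (Fin n)) 1) ≠ ⊤ := measure_ball_lt_top.ne
  have hω := toReal_measure_ball_pos volume (0 : EuclideanSpace ℝ (Fin n)) one_pos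
  rw [Measure.addHaar_ball_of_pos _ _ hr, finrank_euclideanSpace_fin,
    ← ENNReal.ofReal_toReal hω_top, ← ENNReal.ofReal_mul (by positivity),
    ENNReal.ofReal_rpow_of_pos (by positivity), ENNReal.ofReal_toReal hω_top,
    Real.mul_rpow (by positivity) hω.le, mul_comm, ← Real.rpow_natCast, ← Real.rpow_mul hr.le]

theorem EuclideanSpace.volume_ball_mul_rpow (x : EuclideanSpace ℝ (Fin n)) {c r : ℝ} (hc : 0 < c)
    (hr : 0 < r) (e : ℝ) : volume (ball x (c * r)) ^ e = ENNReal.ofReal (c ^ (n * e) *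
      ((volume (ball (0 : EuclideanSpace ℝ (Fin n)) 1)).toReal ^ e * r ^ (n * e))) := by
  rw [volume_ball_rpow x (by positivity), Real.mul_rpow hc.le hr.le]
  ring_nf

theorem EuclideanSpace.volume_ball_rpow_factor (a b : EuclideanSpace ℝ (Fin n)) {c d r : ℝ}
    (hc : 0 < c) (hd : 0 < d) (hr : 0 < r) (u v w : ℝ) :
    (volume (ball a r) ^ u)⁻¹ * volume (ball a (c * r)) ^ v * volume (ball b (d * r)) ^ w =
      ENNReal.ofReal (c ^ (n * v) * d ^ (n * w) *
        ((volume (ball (0 : EuclideanSpace ℝ (Fin n)) 1)).toReal ^ (v + w - u) *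
          r ^ (n * (v + w - u)))) := by
  have hω := toReal_measure_ball_pos volume (0 : EuclideanSpace ℝ (Fin n)) one_pos
  rw [← ENNReal.rpow_neg, volume_ball_rpow a hr, volume_ball_mul_rpow a hc hr,
    volume_ball_mul_rpow b hd hr, ← ENNReal.ofReal_mul (by positivity),
    ← ENNReal.ofReal_mul (by positivity)]
  congr 1
  rw [sub_eq_neg_add, Real.rpow_add hω, Real.rpow_add hω, mul_add, mul_add,
    Real.rpow_add hr, Real.rpow_add hr]
  ring

theorem setLIntegral_ball_rpow_le_morreyNorm (f : EuclideanSpace ℝ (Fin n) → ℝ) (p q : ℝ)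
    (a : EuclideanSpace ℝ (Fin n)) {R : ℝ} (hR : 0 < R) :
    (∫⁻ x in ball a R, ENNReal.ofReal (|f x| ^ p)) ^ (1 / p) ≤
      volume (ball a R) ^ (1 / p - 1 / q) * morreyNorm n p q f := by
  have hV0 : volume (ball a R) ≠ 0 := (measure_ball_pos _ _ hR).ne'
  have hV : volume (ball a R) ≠ ⊤ := measure_ball_lt_top.ne
  calc (∫⁻ x in ball a R, ENNReal.ofReal (|f x| ^ p)) ^ (1 / p)
      = volume (ball a R) ^ (1 / p - 1 / q) * (volume (ball a R) ^ (1 / q - 1 / p) *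
          (∫⁻ x in ball a R, ENNReal.ofReal (|f x| ^ p)) ^ (1 / p)) := by
        rw [← mul_assoc, ← ENNReal.rpow_add _ _ hV0 hV, sub_add_sub_cancel, sub_self,
          ENNReal.rpow_zero, one_mul]
    _ ≤ _ := by
        gcongr
        exact le_iSup₂_of_le (f := fun a R ↦ ⨆ (_ : 0 < R), _) a R (le_iSup_of_le hR le_rfl)

theorem setLIntegral_ball_rpow_le_gMorreyNorm (f : EuclideanSpace ℝ (Fin n) → ℝ) {p : ℝ}
    (hp : 0 ≤ p) {φ : ℝ → ℝ} (a : EuclideanSpace ℝ (Fin n)) {R : ℝ} (hR : 0 < R) (hφ : 0 < φ R) :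
    (∫⁻ x in ball a R, ENNReal.ofReal (|f x| ^ p)) ^ (1 / p) ≤
      ENNReal.ofReal (φ R) * volume (ball a R) ^ (1 / p) * gMorreyNorm n p φ f := by
  have hV0 : volume (ball a R) ^ (1 / p) ≠ 0 :=
    (ENNReal.rpow_pos (measure_ball_pos _ _ hR) measure_ball_lt_top.ne).ne'
  have hV : volume (ball a R) ^ (1 / p) ≠ ⊤ :=
    ENNReal.rpow_ne_top_of_nonneg (by positivity) measure_ball_lt_top.ne
  have hφ0 : ENNReal.ofReal (φ R) ≠ 0 := (ENNReal.ofReal_pos.mpr hφ).ne'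
  calc (∫⁻ x in ball a R, ENNReal.ofReal (|f x| ^ p)) ^ (1 / p)
      = ENNReal.ofReal (φ R) * volume (ball a R) ^ (1 / p) * ((ENNReal.ofReal (φ R))⁻¹ *
          ((volume (ball a R))⁻¹ * ∫⁻ x in ball a R, ENNReal.ofReal (|f x| ^ p)) ^ (1 / p)) := by
        rw [ENNReal.mul_rpow_of_nonneg _ _ (by positivity), ENNReal.inv_rpow,
          mul_mul_mul_comm, ← mul_assoc, ENNReal.mul_inv_cancel hφ0 ENNReal.ofReal_ne_top,
          one_mul, ← mul_assoc, ENNReal.mul_inv_cancel hV0 hV, one_mul]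
    _ ≤ _ := by
        gcongr
        exact le_iSup₂_of_le (f := fun a R ↦ ⨆ (_ : 0 < R), _) a R (le_iSup_of_le hR le_rfl)

theorem enorm_besselRiesz_indicator_le (α γ : ℝ) (f : EuclideanSpace ℝ (Fin n) → ℝ)
    {a x : EuclideanSpace ℝ (Fin n)} {R : ℝ} (hx : x ∈ ball a R) :
    ‖besselRiesz n α γ ((ball a (2 * R)).indicator f) x‖ₑ ≤
      (((ball a (2 * R)).indicator fun y ↦ ‖f y‖ₑ) ⋆ₗ
        ((ball 0 (3 * R)).indicator fun z ↦ ‖besselRieszKernel n α γ z‖ₑ)) x := by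
  refine (enorm_integral_le_lintegral_enorm _).trans (lintegral_mono fun y ↦ ?_)
  rw [enorm_mul, mul_comm, neg_add_eq_sub, enorm_indicator_eq_indicator_enorm]
  by_cases hy : y ∈ ball a (2 * R)
  · have hxy : x - y ∈ ball 0 (3 * R) := by
      rw [mem_ball_zero_iff, ← dist_eq_norm]
      linarith [dist_triangle_right x y a, mem_ball.mp hx, mem_ball.mp hy]
    rw [Set.indicator_of_mem hxy]
  · simp [Set.indicator_of_notMem hy]

theorem setLIntegral_besselRiesz_indicator_le {α γ p₁ p₂ s : ℝ} (hp₁ : 1 ≤ p₁) (hs : 1 ≤ s)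
    (hp₂ : 0 < p₂) (hexp : 1 / p₁ + 1 / s = 1 + 1 / p₂) {f : EuclideanSpace ℝ (Fin n) → ℝ}
    (hf : Measurable f) (a : EuclideanSpace ℝ (Fin n)) (R : ℝ) :
    ∫⁻ x in ball a R, ENNReal.ofReal
        (|besselRiesz n α γ ((ball a (2 * R)).indicator f) x| ^ p₂) ≤
      (∫⁻ x in ball a (2 * R), ENNReal.ofReal (|f x| ^ p₁)) ^ (p₂ / p₁) *
        (∫⁻ x in ball 0 (3 * R), ENNReal.ofReal (|besselRieszKernel n α γ x| ^ s)) ^ (p₂ / s) := by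
  have hofReal : ∀ (u : ℝ) {p : ℝ}, 0 ≤ p → ENNReal.ofReal (|u| ^ p) = ‖u‖ₑ ^ p := fun u p hp ↦ by
    rw [Real.enorm_eq_ofReal_abs, ENNReal.ofReal_rpow_of_nonneg (abs_nonneg u) hp]
  have hK : Measurable (besselRieszKernel n α γ) := by
    unfold besselRieszKernel
    fun_prop
  set g := (ball a (2 * R)).indicator fun y ↦ ‖f y‖ₑ
  set k := (ball (0 : EuclideanSpace ℝ (Fin n)) (3 * R)).indicator
    fun z ↦ ‖besselRieszKernel n α γ z‖ₑ
  calc ∫⁻ x in ball a R, ENNReal.ofReal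
        (|besselRiesz n α γ ((ball a (2 * R)).indicator f) x| ^ p₂)
      ≤ ∫⁻ x in ball a R, (g ⋆ₗ k) x ^ p₂ := by
        refine setLIntegral_mono' measurableSet_ball fun x hx ↦ ?_
        rw [hofReal _ hp₂.le]
        gcongr
        exact enorm_besselRiesz_indicator_le α γ f hx
    _ ≤ ∫⁻ x, (g ⋆ₗ k) x ^ p₂ := setLIntegral_le_lintegral _ _
    _ ≤ (∫⁻ x, g x ^ p₁) ^ (p₂ / p₁) * (∫⁻ x, k x ^ s) ^ (p₂ / s) :=
        lintegral_lconvolution_rpow_le (hf.enorm.indicator measurableSet_ball)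
          (hK.enorm.indicator measurableSet_ball) hp₁ hs hp₂ hexp
    _ = _ := by
        rw [lintegral_indicator_rpow measurableSet_ball _ (by linarith),
          lintegral_indicator_rpow measurableSet_ball _ (by linarith)]
        simp only [hofReal _ (by linarith : (0 : ℝ) ≤ p₁), hofReal _ (by linarith : (0 : ℝ) ≤ s)]

theorem average_besselRiesz_indicator_le {α γ p₁ p₂ s : ℝ} (hp₁ : 1 ≤ p₁) (hs : 1 ≤ s)
    (hp₂ : 0 < p₂) (hexp : 1 / p₁ + 1 / s = 1 + 1 / p₂) {f : EuclideanSpace ℝ (Fin n) → ℝ}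
    (hf : Measurable f) (a : EuclideanSpace ℝ (Fin n)) (R : ℝ) :
    ((volume (ball a R))⁻¹ * ∫⁻ x in ball a R, ENNReal.ofReal
        (|besselRiesz n α γ ((ball a (2 * R)).indicator f) x| ^ p₂)) ^ (1 / p₂) ≤
      (volume (ball a R) ^ (1 / p₂))⁻¹ *
        (∫⁻ x in ball a (2 * R), ENNReal.ofReal (|f x| ^ p₁)) ^ (1 / p₁) *
        (∫⁻ x in ball 0 (3 * R), ENNReal.ofReal (|besselRieszKernel n α γ x| ^ s)) ^ (1 / s) := by
  calc _ ≤ ((volume (ball a R))⁻¹ *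
          ((∫⁻ x in ball a (2 * R), ENNReal.ofReal (|f x| ^ p₁)) ^ (p₂ / p₁) *
            (∫⁻ x in ball 0 (3 * R), ENNReal.ofReal (|besselRieszKernel n α γ x| ^ s)) ^
              (p₂ / s))) ^ (1 / p₂) := by
        gcongr
        exact setLIntegral_besselRiesz_indicator_le hp₁ hs hp₂ hexp hf a R
    _ = _ := by
        rw [ENNReal.mul_rpow_of_nonneg _ _ (by positivity),
          ENNReal.mul_rpow_of_nonneg _ _ (by positivity), ENNReal.inv_rpow, ← ENNReal.rpow_mul,
          ← ENNReal.rpow_mul, ← mul_assoc, show p₂ / p₁ * (1 / p₂) = 1 / p₁ by field_simp,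
          show p₂ / s * (1 / p₂) = 1 / s by field_simp]

theorem average_besselRiesz_indicator_le_morreyNorm {α γ p₁ p₂ s : ℝ} (t : ℝ) {φ : ℝ → ℝ}
    (hp₁ : 1 ≤ p₁) (hs : 1 ≤ s) (hp₂ : 0 < p₂) (hexp : 1 / p₁ + 1 / s = 1 + 1 / p₂)
    {f : EuclideanSpace ℝ (Fin n) → ℝ} (hf : Measurable f) (a : EuclideanSpace ℝ (Fin n))
    {R : ℝ} (hR : 0 < R) (hφ : 0 < φ (2 * R)) :
    ((volume (ball a R))⁻¹ * ∫⁻ x in ball a R, ENNReal.ofReal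
        (|besselRiesz n α γ ((ball a (2 * R)).indicator f) x| ^ p₂)) ^ (1 / p₂) ≤
      (volume (ball a R) ^ (1 / p₂))⁻¹ * volume (ball a (2 * R)) ^ (1 / p₁) *
        volume (ball (0 : EuclideanSpace ℝ (Fin n)) (3 * R)) ^ (1 / s - 1 / t) *
        ENNReal.ofReal (φ (2 * R)) * morreyNorm n s t (besselRieszKernel n α γ) *
        gMorreyNorm n p₁ φ f := by
  calc _ ≤ (volume (ball a R) ^ (1 / p₂))⁻¹ *
          (∫⁻ x in ball a (2 * R), ENNReal.ofReal (|f x| ^ p₁)) ^ (1 / p₁) *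
          (∫⁻ x in ball 0 (3 * R), ENNReal.ofReal (|besselRieszKernel n α γ x| ^ s)) ^ (1 / s) :=
        average_besselRiesz_indicator_le hp₁ hs hp₂ hexp hf a R
    _ ≤ (volume (ball a R) ^ (1 / p₂))⁻¹ *
          (ENNReal.ofReal (φ (2 * R)) * volume (ball a (2 * R)) ^ (1 / p₁) *
            gMorreyNorm n p₁ φ f) *
          (volume (ball (0 : EuclideanSpace ℝ (Fin n)) (3 * R)) ^ (1 / s - 1 / t) *
            morreyNorm n s t (besselRieszKernel n α γ)) := by
        gcongr
        · exact setLIntegral_ball_rpow_le_gMorreyNorm f (by linarith) a (by positivity) hφ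
        · exact setLIntegral_ball_rpow_le_morreyNorm _ s t 0 (by positivity)
    _ = _ := by ring

end

theorem besselRiesz_local_estimate_general (n : ℕ) (α γ p₁ p₂ s t : ℝ) (φ : ℝ → ℝ)
    (hp₁ : 1 ≤ p₁) (hφ : IsClassG n p₁ φ) (hs : 1 ≤ s)
    (hp₂ : 1 / p₂ = 1 / p₁ - (1 - 1 / s)) (hsp₂ : s < p₂) :
    ∃ C : ℝ, 0 < C ∧ ∀ f : EuclideanSpace ℝ (Fin n) → ℝ,
      Measurable f → gMorreyNorm n p₁ φ f ≠ ⊤ →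
      ∀ (a : EuclideanSpace ℝ (Fin n)) (R : ℝ), 0 < R →
      ((volume (ball a R))⁻¹ *
          ∫⁻ x in ball a R, ENNReal.ofReal
            (|besselRiesz n α γ (Set.indicator (ball a (2 * R)) f) x| ^ p₂)) ^ (1 / p₂) ≤
        ENNReal.ofReal (C * (φ R * R ^ (n * (1 - 1 / t)))) *
          morreyNorm n s t (besselRieszKernel n α γ) * gMorreyNorm n p₁ φ f := by
  obtain ⟨hφpos, ⟨Cd, hCd, hφdec⟩, -⟩ := hφ
  have hω := toReal_measure_ball_pos volume (0 : EuclideanSpace ℝ (Fin n)) one_pos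
  refine ⟨2 ^ (n * (1 / p₁)) * 3 ^ (n * (1 / s - 1 / t)) *
    (volume (ball (0 : EuclideanSpace ℝ (Fin n)) 1)).toReal ^ (1 - 1 / t) / Cd, by positivity,
    fun f hf _ a R hR ↦ ?_⟩
  have hexp : 1 / p₁ + (1 / s - 1 / t) - 1 / p₂ = 1 - 1 / t := by rw [hp₂]; ring
  calc _ ≤ _ := average_besselRiesz_indicator_le_morreyNorm t hp₁ hs (by linarith)
          (by rw [hp₂]; ring) hf a hR (hφpos _ (by positivity))
    _ ≤ ENNReal.ofReal (2 ^ (n * (1 / p₁)) * 3 ^ (n * (1 / s - 1 / t)) *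
          ((volume (ball (0 : EuclideanSpace ℝ (Fin n)) 1)).toReal ^ (1 - 1 / t) *
            R ^ (n * (1 - 1 / t)))) * ENNReal.ofReal (Cd⁻¹ * φ R) *
          morreyNorm n s t (besselRieszKernel n α γ) * gMorreyNorm n p₁ φ f := by
        rw [EuclideanSpace.volume_ball_rpow_factor a 0 two_pos three_pos hR, hexp]
        gcongr
        exact (le_inv_mul_iff₀ hCd).mpr (hφdec R (2 * R) hR (by linarith))
    _ = _ := by
        rw [← ENNReal.ofReal_mul (by positivity)]
        congr 3
        ring

/-- local-part estimate. For `f ∈ L^{p₁,φ}`, a ball `B = B(a,R)` and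
`f₁ = f·χ_{B(a,2R)}`, one has
`((1/|B|) ∫_B |I_{α,γ} f₁|^{p₂})^{1/p₂} ≤ C ψ(R) ‖K_{α,γ}‖_{L^{s,t}} ‖f‖_{L^{p₁,φ}}`,
where `ψ(r) = φ(r) r^{n/t'}`, `1 ≤ s < t = n/(n-α)`, `s < p₂`, `1/p₂ = 1/p₁ - 1/s'`. -/
theorem besselRiesz_local_estimate (n : ℕ) (hn : 1 ≤ n) (α γ p₁ p₂ s t : ℝ) (φ : ℝ → ℝ)
    (hα0 : 0 < α) (hαn : α < n) (hγ : 0 ≤ γ)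
    (hp₁ : 1 ≤ p₁) (hp₁n : p₁ < n / α) (hφ : IsClassG n p₁ φ)
    (hs : 1 ≤ s) (hst : s < t) (ht : t = n / (n - α))
    (hp₂ : 1 / p₂ = 1 / p₁ - (1 - 1 / s)) (hsp₂ : s < p₂) :
    ∃ C : ℝ, 0 < C ∧ ∀ f : EuclideanSpace ℝ (Fin n) → ℝ,
      Measurable f → gMorreyNorm n p₁ φ f ≠ ⊤ →
      ∀ (a : EuclideanSpace ℝ (Fin n)) (R : ℝ), 0 < R →
      ((volume (ball a R))⁻¹ *
          ∫⁻ x in ball a R, ENNReal.ofReal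
            (|besselRiesz n α γ (Set.indicator (ball a (2 * R)) f) x| ^ p₂)) ^ (1 / p₂) ≤
        ENNReal.ofReal (C * (φ R * R ^ (n * (1 - 1 / t)))) *
          morreyNorm n s t (besselRieszKernel n α γ) * gMorreyNorm n p₁ φ f :=
  besselRiesz_local_estimate_general n α γ p₁ p₂ s t φ hp₁ hφ hs hp₂ hsp₂
end

section
/- Let n ≥ 1 be an integer, 0 < α < n, and 1 ≤ p₁ < t = n/(n−α). Then there exists a constant C > 0 depending only on n and p₁ such that ||K_α||_{L^{p₁,t}}^{p₁} ≥ C/((α−n)p₁ + n); moreover, since (α−n)p₁ + n ≤ α, one has ||K_α||_{L^{p₁,t}}^{p₁} ≥ C/α. -/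
open MeasureTheory Metric
open scoped ENNReal NNReal

/-!
Test the Morrey norm on the unit ball `B` centred at the origin. In polar coordinates
`∫_B |x|^{(α-n)p} dx = n |B| / ((α-n)p + n)`, so the `p`-th power of the Morrey quotient of `K_α`
on `B` is `n |B|^{p/t} / ((α-n)p + n)`. Since `0 < p/t < 1`, `|B|^{p/t} ≥ min |B| 1`, which gives
the constant `C = n min(|B|, 1)`, depending only on `n`.
-/

open Set

section PolarCoordinates

variable {E : Type*} [NormedAddCommGroup E] [NormedSpace ℝ E] [FiniteDimensional ℝ E]
  [MeasurableSpace E] [BorelSpace E] [Nontrivial E] (μ : Measure E) [μ.IsAddHaarMeasure]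

theorem integral_norm_rpow_ball_zero_one {s : ℝ} (hs : 0 < s + Module.finrank ℝ E) :
    ∫ x in ball (0 : E) 1, ‖x‖ ^ s ∂μ =
      Module.finrank ℝ E * μ.real (ball 0 1) / (s + Module.finrank ℝ E) := by
  set d := Module.finrank ℝ E
  have hd : 1 ≤ d := Module.finrank_pos
  have h_radial : ∫ x in ball (0 : E) 1, ‖x‖ ^ s ∂μ =
      ∫ x, (Iio 1).indicator (· ^ s) ‖x‖ ∂μ := by
    rw [← integral_indicator measurableSet_ball]
    congr 1 with x
    by_cases hx : ‖x‖ < 1 <;> simp [indicator, hx]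
  have h_profile : ∫ y in Ioi (0 : ℝ), y ^ (d - 1) • (Iio 1).indicator (· ^ s) y =
      1 / (s + d) := by
    have h_eq : EqOn (fun y : ℝ ↦ y ^ (d - 1) • (Iio 1).indicator (· ^ s) y)
        ((Iio 1).indicator (· ^ (s + d - 1))) (Ioi 0) := by
      intro y (hy : 0 < y)
      by_cases hy1 : y < 1
      · simp only [indicator_of_mem (show y ∈ Iio 1 from hy1), smul_eq_mul]
        rw [← Real.rpow_natCast, ← Real.rpow_add hy, Nat.cast_sub hd, Nat.cast_one]
        ring_nf
      · simp [indicator_of_notMem (show y ∉ Iio 1 from hy1)]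
    rw [setIntegral_congr_fun measurableSet_Ioi h_eq, integral_indicator measurableSet_Iio,
      Measure.restrict_restrict measurableSet_Iio, Iio_inter_Ioi, ← integral_Ioc_eq_integral_Ioo,
      ← intervalIntegral.integral_of_le zero_le_one, integral_rpow (Or.inl (by linarith)),
      sub_add_cancel, Real.one_rpow, Real.zero_rpow hs.ne']
    ring
  rw [h_radial, integral_fun_norm_addHaar μ, h_profile, nsmul_eq_mul, smul_eq_mul]
  ring

theorem lintegral_norm_rpow_ball_zero_one {s : ℝ} (hs : 0 < s + Module.finrank ℝ E) :
    ∫⁻ x in ball (0 : E) 1, ENNReal.ofReal (‖x‖ ^ s) ∂μ =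
      ENNReal.ofReal (Module.finrank ℝ E / (s + Module.finrank ℝ E)) * μ (ball 0 1) := by
  have h_int : IntegrableOn (fun x : E ↦ ‖x‖ ^ s) (ball 0 1) μ :=
    integrableOn_ball_of_norm_le_rpow Module.finrank_pos (C := 1) (α := -s) (by linarith)
      (.of_forall fun x ↦ by simp [Real.norm_of_nonneg (Real.rpow_nonneg (norm_nonneg x) s)])
      (continuous_norm.measurable.pow_const s).aestronglyMeasurable
  rw [← ofReal_integral_eq_lintegral_ofReal h_int (.of_forall fun x ↦ by positivity),
    integral_norm_rpow_ball_zero_one μ hs, mul_div_right_comm, ENNReal.ofReal_mul' (by positivity),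
    Measure.real, ENNReal.ofReal_toReal measure_ball_lt_top.ne]

end PolarCoordinates

theorem ENNReal.min_one_le_rpow {x : ℝ≥0∞} {θ : ℝ} (hθ₀ : 0 ≤ θ) (hθ₁ : θ ≤ 1) :
    min x 1 ≤ x ^ θ := by
  rcases le_total x 1 with hx | hx
  · calc min x 1 ≤ x := min_le_left _ _
      _ = x ^ (1 : ℝ) := (ENNReal.rpow_one x).symm
      _ ≤ x ^ θ := ENNReal.rpow_le_rpow_of_exponent_ge hx hθ₁
  · calc min x 1 ≤ 1 := min_le_right _ _
      _ = x ^ (0 : ℝ) := ENNReal.rpow_zero.symm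
      _ ≤ x ^ θ := ENNReal.rpow_le_rpow_of_exponent_le hx hθ₀

theorem volume_ball_rpow_mul_lintegral_le_morreyNorm_rpow {n : ℕ} {p : ℝ} (q : ℝ) (hp : 0 < p)
    (f : EuclideanSpace ℝ (Fin n) → ℝ) (a : EuclideanSpace ℝ (Fin n)) {R : ℝ} (hR : 0 < R) :
    volume (ball a R) ^ (p / q - 1) * ∫⁻ x in ball a R, ENNReal.ofReal (|f x| ^ p) ≤
      morreyNorm n p q f ^ p := by
  calc volume (ball a R) ^ (p / q - 1) * ∫⁻ x in ball a R, ENNReal.ofReal (|f x| ^ p)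
      = (volume (ball a R) ^ (1 / q - 1 / p) *
          (∫⁻ x in ball a R, ENNReal.ofReal (|f x| ^ p)) ^ (1 / p)) ^ p := by
        rw [ENNReal.mul_rpow_of_nonneg _ _ hp.le, ← ENNReal.rpow_mul, ← ENNReal.rpow_mul,
          one_div_mul_cancel hp.ne', ENNReal.rpow_one]
        congr 2
        field_simp
    _ ≤ morreyNorm n p q f ^ p :=
        ENNReal.rpow_le_rpow (le_iSup_of_le a (le_iSup_of_le R (le_iSup_of_le hR le_rfl))) hp.le

theorem abs_rieszKernel_rpow (n : ℕ) (α p : ℝ) (x : EuclideanSpace ℝ (Fin n)) :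
    |rieszKernel n α x| ^ p = ‖x‖ ^ ((α - n) * p) := by
  rw [rieszKernel, abs_of_nonneg (by positivity), Real.rpow_mul (norm_nonneg x)]

theorem lintegral_rieszKernel_rpow_ball_zero_one {n : ℕ} (hn : 1 ≤ n) {α p : ℝ}
    (hs : 0 < (α - n) * p + n) :
    ∫⁻ x in ball (0 : EuclideanSpace ℝ (Fin n)) 1, ENNReal.ofReal (|rieszKernel n α x| ^ p) =
      ENNReal.ofReal (n / ((α - n) * p + n)) * volume (ball (0 : EuclideanSpace ℝ (Fin n)) 1) := by
  have : Nonempty (Fin n) := ⟨⟨0, hn⟩⟩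
  simp_rw [abs_rieszKernel_rpow]
  rw [lintegral_norm_rpow_ball_zero_one volume (by rwa [finrank_euclideanSpace_fin]),
    finrank_euclideanSpace_fin]

theorem le_morreyNorm_rieszKernel_rpow {n : ℕ} (hn : 1 ≤ n) {α p q : ℝ} (hp : 0 < p)
    (hpq : p ≤ q) (hs : 0 < (α - n) * p + n) :
    ENNReal.ofReal (n / ((α - n) * p + n)) * min (volume (ball (0 : EuclideanSpace ℝ (Fin n)) 1)) 1
      ≤ morreyNorm n p q (rieszKernel n α) ^ p := by
  set V := volume (ball (0 : EuclideanSpace ℝ (Fin n)) 1)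
  have hV₀ : V ≠ 0 := (measure_ball_pos volume 0 one_pos).ne'
  have hV : V ≠ ⊤ := measure_ball_lt_top.ne
  calc ENNReal.ofReal (n / ((α - n) * p + n)) * min V 1
      ≤ ENNReal.ofReal (n / ((α - n) * p + n)) * V ^ (p / q) := by
        gcongr
        exact ENNReal.min_one_le_rpow (div_nonneg hp.le (hp.le.trans hpq))
          ((div_le_one (hp.trans_le hpq)).2 hpq)
    _ = V ^ (p / q - 1) * ∫⁻ x in ball 0 1, ENNReal.ofReal (|rieszKernel n α x| ^ p) := by
        rw [lintegral_rieszKernel_rpow_ball_zero_one hn hs, mul_left_comm,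
          ← sub_add_cancel (p / q) 1, ENNReal.rpow_add _ _ hV₀ hV, ENNReal.rpow_one,
          add_sub_cancel_right]
    _ ≤ morreyNorm n p q (rieszKernel n α) ^ p :=
        volume_ball_rpow_mul_lintegral_le_morreyNorm_rpow q hp _ 0 one_pos

theorem rieszKernel_morreyNorm_lower_general (n : ℕ) (hn : 1 ≤ n) (α p₁ t : ℝ)
    (hαn : α < n) (hp₁ : 1 ≤ p₁)
    (ht : t = n / (n - α)) (hp₁t : p₁ < t) :
    ∃ C : ℝ, 0 < C ∧
      ENNReal.ofReal (C / ((α - n) * p₁ + n)) ≤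
        morreyNorm n p₁ t (rieszKernel n α) ^ p₁ ∧
      ENNReal.ofReal (C / α) ≤ morreyNorm n p₁ t (rieszKernel n α) ^ p₁ := by
  have hnα : 0 < (n : ℝ) - α := by linarith
  have hs : 0 < (α - n) * p₁ + n := by
    rw [ht, lt_div_iff₀ hnα] at hp₁t
    linarith
  have hsα : (α - n) * p₁ + n ≤ α := by nlinarith
  set V := volume (ball (0 : EuclideanSpace ℝ (Fin n)) 1)
  have hmin : min V 1 ≠ ⊤ := (min_lt_of_right_lt ENNReal.one_lt_top).ne
  have hC : 0 < n * (min V 1).toReal := by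
    have : 0 < min V 1 := lt_min (measure_ball_pos volume 0 one_pos) one_pos
    exact mul_pos (by exact_mod_cast hn) (ENNReal.toReal_pos this.ne' hmin)
  have key : ENNReal.ofReal (n * (min V 1).toReal / ((α - n) * p₁ + n)) ≤
      morreyNorm n p₁ t (rieszKernel n α) ^ p₁ := by
    rw [mul_div_right_comm, ENNReal.ofReal_mul (by positivity), ENNReal.ofReal_toReal hmin]
    exact le_morreyNorm_rieszKernel_rpow hn (by linarith) hp₁t.le hs
  exact ⟨_, hC, key,
    key.trans' (ENNReal.ofReal_le_ofReal (div_le_div_of_nonneg_left hC.le hs hsα))⟩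

/-- for `1 ≤ p₁ < t = n/(n-α)` there is `C > 0` depending only on `n`
and `p₁` such that `‖K_α‖_{L^{p₁,t}}^{p₁} ≥ C / ((α-n)p₁ + n)`; moreover, since
`(α-n)p₁ + n ≤ α`, also `‖K_α‖_{L^{p₁,t}}^{p₁} ≥ C / α`. -/
theorem rieszKernel_morreyNorm_lower (n : ℕ) (hn : 1 ≤ n) (α p₁ t : ℝ)
    (hα0 : 0 < α) (hαn : α < n) (hp₁ : 1 ≤ p₁)
    (ht : t = n / (n - α)) (hp₁t : p₁ < t) :
    ∃ C : ℝ, 0 < C ∧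
      ENNReal.ofReal (C / ((α - n) * p₁ + n)) ≤
        morreyNorm n p₁ t (rieszKernel n α) ^ p₁ ∧
      ENNReal.ofReal (C / α) ≤ morreyNorm n p₁ t (rieszKernel n α) ^ p₁ :=
  rieszKernel_morreyNorm_lower_general n hn α p₁ t hαn hp₁ ht hp₁t
end
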